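/- arXiv:1803.03197 — 5 statements merged into one kernel-verified Lean document; each statement's English description precedes it below -/
import Mathlib

section
/- Let r ≥ 4. The graphs M_even and M_odd (defined as in the paper, with vertex sets indexed by even- resp. odd-weight length-r binary sequences together with vertices v_{i,h} and labelled leaves x_i, and adjacency u_w ~ v_{i,h} iff w i = h, x_i ~ v_{i,0}) are not isomorphic via any label-preserving graph isomorphism (i.e., any isomorphism fixing each leaf x_i). -/
/-- The weight of a binary sequence: the number of `true` entries. -/
def wt {r : ℕ} (w : Fin r → Bool) : ℕ :=
  (Finset.univ.filter fun j => w j = true).card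

/-- Even-weight binary sequences of length `r`. -/
def Seven (r : ℕ) : Set (Fin r → Bool) := {w | Even (wt w)}

/-- Odd-weight binary sequences of length `r`. -/
def Sodd (r : ℕ) : Set (Fin r → Bool) := {w | Odd (wt w)}

/-- Flip the `i`-th entry of `w`. -/
def inv {r : ℕ} (w : Fin r → Bool) (i : Fin r) : Fin r → Bool :=
  Function.update w i (!w i)

/-- Vertices of the graph `M S`: a vertex `u_w` for each `w ∈ S`,
a vertex `v_{i,h}` for each `i ∈ [r]`, `h ∈ {0,1}`, and a leaf `x_i` for each `i ∈ [r]`. -/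
abbrev Vtx (r : ℕ) (S : Set (Fin r → Bool)) :=
  {w // w ∈ S} ⊕ ((Fin r × Bool) ⊕ Fin r)

/-- The vertex `u_w`. -/
abbrev vtxU {r : ℕ} {S : Set (Fin r → Bool)} (w : Fin r → Bool) (hw : w ∈ S) : Vtx r S :=
  Sum.inl ⟨w, hw⟩

/-- The vertex `v_{i,h}`. -/
abbrev vtxV {r : ℕ} {S : Set (Fin r → Bool)} (i : Fin r) (h : Bool) : Vtx r S :=
  Sum.inr (Sum.inl (i, h))

/-- The labelled leaf `x_i`. -/
abbrev vtxX {r : ℕ} {S : Set (Fin r → Bool)} (i : Fin r) : Vtx r S :=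
  Sum.inr (Sum.inr i)

/-- `u_w` is adjacent to `v_{i,h}` iff `w i = h`; `x_i` is adjacent (only) to `v_{i,0}`. -/
def MRel {r : ℕ} {S : Set (Fin r → Bool)} : Vtx r S → Vtx r S → Prop
  | Sum.inl w, Sum.inr (Sum.inl p) => w.1 p.1 = p.2
  | Sum.inr (Sum.inl p), Sum.inr (Sum.inr j) => p.1 = j ∧ p.2 = false
  | _, _ => False

/-- The graph `M S` (this is `M_even` when `S = Seven r`, and `M_odd` when `S = Sodd r`). -/
def M (r : ℕ) (S : Set (Fin r → Bool)) : SimpleGraph (Vtx r S) :=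
  SimpleGraph.fromRel MRel

lemma adj_x {r : ℕ} {S : Set (Fin r → Bool)} {y : Vtx r S} {i : Fin r}
    (h : (M r S).Adj y (vtxX i)) : y = vtxV i false := by
  rw [M, SimpleGraph.fromRel_adj] at h
  obtain ⟨-, h | h⟩ := h
  · match y with
    | Sum.inl w => exact absurd h id
    | Sum.inr (Sum.inl p) => obtain ⟨h1, h2⟩ := h; simp [vtxV, ← h1, ← h2]
    | Sum.inr (Sum.inr j) => exact absurd h id
  · match y with
    | Sum.inl w => exact absurd h id
    | Sum.inr (Sum.inl p) => exact absurd h id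
    | Sum.inr (Sum.inr j) => exact absurd h id

lemma adj_v {r : ℕ} {S : Set (Fin r → Bool)} {y : Vtx r S} {i : Fin r} {h : Bool}
    (hadj : (M r S).Adj y (vtxV i h)) :
    (∃ w hw, y = vtxU w hw ∧ w i = h) ∨ (∃ j : Fin r, y = vtxX j ∧ i = j ∧ h = false) := by
  rw [M, SimpleGraph.fromRel_adj] at hadj
  obtain ⟨-, hh | hh⟩ := hadj
  · match y with
    | Sum.inl w => exact Or.inl ⟨w.1, w.2, rfl, hh⟩
    | Sum.inr (Sum.inl p) => exact absurd hh id
    | Sum.inr (Sum.inr j) => exact absurd hh id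
  · match y with
    | Sum.inl w => exact absurd hh id
    | Sum.inr (Sum.inl p) => exact absurd hh id
    | Sum.inr (Sum.inr j) => exact Or.inr ⟨j, rfl, hh⟩

theorem M_not_label_isomorphic (r : ℕ) (hr : 4 ≤ r) :
    ¬ ∃ f : M r (Seven r) ≃g M r (Sodd r), ∀ i : Fin r, f (vtxX i) = vtxX i := by
  rintro ⟨f, hx⟩
  -- f fixes each v_{i,0}
  have hv : ∀ i : Fin r, f (vtxV i false) = vtxV i false := by
    intro i
    have h1 : (M r (Seven r)).Adj (vtxV i false) (vtxX i) := by
      rw [M, SimpleGraph.fromRel_adj]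
      exact ⟨by simp, Or.inl ⟨rfl, rfl⟩⟩
    have h2 := f.map_adj_iff.mpr h1
    rw [hx i] at h2
    exact adj_x h2
  -- the all-false sequence has even weight
  have hw0 : (fun _ : Fin r => false) ∈ Seven r := by simp [Seven, wt]
  have hadj0 : ∀ i : Fin r, (M r (Sodd r)).Adj (f (vtxU _ hw0)) (vtxV i false) := by
    intro i
    have h1 : (M r (Seven r)).Adj (vtxU _ hw0) (vtxV i false) := by
      rw [M, SimpleGraph.fromRel_adj]
      exact ⟨by simp, Or.inl rfl⟩
    have h2 := f.map_adj_iff.mpr h1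
    rwa [hv i] at h2
  rcases hfy : f (vtxU _ hw0) with w | p | j <;> rw [hfy] at hadj0
  · have hall : ∀ i, w.1 i = false := by
      intro i
      rcases adj_v (hadj0 i) with ⟨w', hw', he, hval⟩ | ⟨j, he, _⟩
      · rw [show w' = w.1 from congrArg (fun z => match z with | Sum.inl a => a.1 | _ => w.1) he.symm] at hval
        exact hval
      · exact absurd he (by simp)
    have := w.2
    rw [show w.1 = fun _ => false from funext hall] at this
    simp [Sodd, wt] at this
  · rcases adj_v (hadj0 ⟨0, by omega⟩) with ⟨w', hw', he, hval⟩ | ⟨j, he, _⟩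
    · exact absurd he (by simp)
    · exact absurd he (by simp)
  · have h1 := adj_v (hadj0 ⟨0, by omega⟩)
    have h2 := adj_v (hadj0 ⟨1, by omega⟩)
    rcases h1 with ⟨w', hw', he, hval⟩ | ⟨j1, he1, hij1, _⟩
    · exact absurd he (by simp)
    rcases h2 with ⟨w', hw', he, hval⟩ | ⟨j2, he2, hij2, _⟩
    · exact absurd he (by simp)
    have hjj : j1 = j2 := by
      simp only [vtxX, Sum.inr.injEq] at he1 he2
      rw [← he1, ← he2]
    rw [← hij1, ← hij2] at hjj
    exact absurd (Fin.val_eq_of_eq hjj) (by simp)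
end

section
/- Let r ≥ 4 and fix i ∈ [r]. Let M_even − x_i and M_odd − x_i denote the graphs obtained from M_even and M_odd by deleting the leaf x_i. Then the map f defined by f(u_w) = u_{inv(w,i)}, f(v_{i,0}) = v_{i,1}, f(v_{i,1}) = v_{i,0}, and f fixing all other vertices (v_{j,h} for j ≠ i and x_j for j ≠ i), is a label-preserving graph isomorphism from M_even − x_i to M_odd − x_i. -/
/-- The vertex set after deleting the leaf `x_i`. -/
def delX (r : ℕ) (S : Set (Fin r → Bool)) (i : Fin r) : Set (Vtx r S) :=
  {a | a ≠ vtxX i}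

/-- The graph `M S` with the leaf `x_i` deleted. -/
def Mdel (r : ℕ) (S : Set (Fin r → Bool)) (i : Fin r) :
    SimpleGraph (delX r S i) :=
  (M r S).induce (delX r S i)

/-!
Flipping the `i`-th coordinate changes the weight by one, so `w ↦ inv w i` is a bijection
between even- and odd-weight words. Extending it by `v_{i,h} ↦ v_{i,!h}` keeps every edge
`u_w v_{j,h}` (the condition `w j = h` is flipped on both sides exactly when `j = i`), and
the only edge it breaks, `v_{i,0} x_i`, disappears once `x_i` is deleted.
-/

section Weight

variable {r : ℕ}

lemma inv_apply_eq_ite (w : Fin r → Bool) (i j : Fin r) :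
    inv w i j = if j = i then !w i else w j := by
  by_cases hj : j = i <;> simp [inv, hj]

lemma inv_inv_eq_self (w : Fin r → Bool) (i : Fin r) : inv (inv w i) i = w := by
  funext j
  by_cases hj : j = i <;> simp [inv_apply_eq_ite, hj]

lemma odd_wt_inv_add_wt (w : Fin r → Bool) (i : Fin r) : Odd (wt (inv w i) + wt w) := by
  simp only [wt, Finset.card_filter]
  rw [Fintype.sum_eq_add_sum_compl i, Fintype.sum_eq_add_sum_compl i (fun j => if w j then 1 else 0)]
  have hrest : ∑ j ∈ {i}ᶜ, (if inv w i j then 1 else 0) = ∑ j ∈ {i}ᶜ, (if w j then 1 else 0) :=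
    Finset.sum_congr rfl fun j hj => by simp_all [inv_apply_eq_ite]
  rw [hrest]
  rcases hwi : w i <;> simp [inv_apply_eq_ite, hwi, add_assoc, ← two_mul]

lemma inv_mem_sodd_iff {w : Fin r → Bool} (i : Fin r) : inv w i ∈ Sodd r ↔ w ∈ Seven r :=
  Nat.odd_add.mp (odd_wt_inv_add_wt w i)

end Weight

section Flip

variable {r : ℕ} {S T : Set (Fin r → Bool)} (i : Fin r) (hST : ∀ w, w ∈ S ↔ inv w i ∈ T)

def flipV : Equiv.Perm (Fin r × Bool) where
  toFun p := (p.1, if p.1 = i then !p.2 else p.2)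
  invFun p := (p.1, if p.1 = i then !p.2 else p.2)
  left_inv := fun ⟨j, h⟩ => by by_cases hj : j = i <;> simp [hj]
  right_inv := fun ⟨j, h⟩ => by by_cases hj : j = i <;> simp [hj]

def flipU : {w // w ∈ S} ≃ {w // w ∈ T} :=
  (Function.Involutive.toPerm (inv · i) (inv_inv_eq_self · i)).subtypeEquiv hST

def flipAt : Vtx r S ≃ Vtx r T :=
  Equiv.sumCongr (flipU i hST) (Equiv.sumCongr (flipV i) (Equiv.refl _))

@[simp] lemma flipAt_vtxU (w : Fin r → Bool) (hw : w ∈ S) :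
    flipAt i hST (vtxU w hw) = vtxU (inv w i) ((hST w).mp hw) := rfl

@[simp] lemma flipAt_vtxV (j : Fin r) (h : Bool) :
    flipAt i hST (vtxV j h) = vtxV j (if j = i then !h else h) := rfl

@[simp] lemma flipAt_vtxX (j : Fin r) : flipAt i hST (vtxX j) = vtxX j := rfl

lemma mRel_flipAt_iff (a : Vtx r S) {b : Vtx r S} (hb : b ≠ vtxX i) :
    MRel (flipAt i hST a) (flipAt i hST b) ↔ MRel a b := by
  rcases a with ⟨w, hw⟩ | ⟨j, h⟩ | j <;> rcases b with ⟨w', hw'⟩ | ⟨j', h'⟩ | j' <;>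
    simp [MRel, inv_apply_eq_ite] at hb ⊢
  · split_ifs with hj <;> simp [hj]
  · rintro rfl
    exact hb

def Mdel.flipIso : Mdel r S i ≃g Mdel r T i where
  toEquiv := (flipAt i hST).subtypeEquiv fun a => (flipAt i hST).injective.ne_iff' rfl |>.symm
  map_rel_iff' {a b} := by
    change (M r T).Adj (flipAt i hST a) (flipAt i hST b) ↔ (M r S).Adj a b
    simp only [M, SimpleGraph.fromRel_adj, (flipAt i hST).injective.ne_iff,
      mRel_flipAt_iff i hST _ a.2, mRel_flipAt_iff i hST _ b.2]

@[simp] lemma Mdel.coe_flipIso_apply (a : delX r S i) :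
    (Mdel.flipIso i hST a : Vtx r T) = flipAt i hST a := rfl

end Flip

theorem Mdel_explicit_iso (r : ℕ) (i : Fin r) :
    ∃ φ : Mdel r (Seven r) i ≃g Mdel r (Sodd r) i,
      (∀ (w : Fin r → Bool) (hw : w ∈ Seven r) (hw' : inv w i ∈ Sodd r),
        φ ⟨vtxU w hw, by simp [delX, vtxU, vtxX]⟩ =
          ⟨vtxU (inv w i) hw', by simp [delX, vtxU, vtxX]⟩) ∧
      (∀ h : Bool,
        φ ⟨vtxV i h, by simp [delX, vtxV, vtxX]⟩ =
          ⟨vtxV i (!h), by simp [delX, vtxV, vtxX]⟩) ∧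
      (∀ (j : Fin r) (h : Bool), j ≠ i →
        φ ⟨vtxV j h, by simp [delX, vtxV, vtxX]⟩ =
          ⟨vtxV j h, by simp [delX, vtxV, vtxX]⟩) ∧
      (∀ (j : Fin r) (hj : j ≠ i),
        φ ⟨vtxX j, by simp [delX, vtxX, hj]⟩ =
          ⟨vtxX j, by simp [delX, vtxX, hj]⟩) := by
  refine ⟨Mdel.flipIso i fun w => (inv_mem_sodd_iff i).symm, fun w hw hw' => rfl,
    fun h => ?_, fun j h hj => ?_, fun j hj => rfl⟩ <;>
    exact Subtype.ext (by simp [*])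
end

section
/- Let r ≥ 4 and fix i ∈ [r]. The graphs M_even − x_i and M_odd − x_i, obtained from M_even and M_odd by deleting the labelled leaf x_i, are isomorphic via a label-preserving isomorphism. -/
lemma wt_add_inv_odd {r : ℕ} (w : Fin r → Bool) (i : Fin r) :
    Odd (wt w + wt (inv w i)) := by
  classical
  have h1 : wt w = ∑ j, if w j = true then 1 else 0 := by
    rw [wt]; exact Finset.card_filter _ _
  have h2 : wt (inv w i) = ∑ j, if inv w i j = true then 1 else 0 := by
    rw [wt]; exact Finset.card_filter _ _
  rw [h1, h2, ← Finset.sum_add_distrib,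
    ← Finset.add_sum_erase _ _ (Finset.mem_univ i)]
  have hterm : ((if w i = true then 1 else 0) + (if inv w i i = true then 1 else 0)) = 1 := by
    simp only [inv, Function.update_self]
    cases w i <;> simp
  have hrest : ∀ j ∈ Finset.univ.erase i,
      ((if w j = true then 1 else 0) + (if inv w i j = true then 1 else 0))
        = 2 * (if w j = true then 1 else 0) := by
    intro j hj
    have hne : j ≠ i := Finset.ne_of_mem_erase hj
    rw [inv, Function.update_of_ne hne]
    by_cases hwj : w j = true <;> simp [hwj]
  rw [Finset.sum_congr rfl hrest, hterm]
  exact ⟨∑ j ∈ Finset.univ.erase i, (if w j = true then 1 else 0), by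
    rw [Finset.mul_sum]; ring⟩

lemma inv_mem_odd {r : ℕ} {w : Fin r → Bool} (i : Fin r) (hw : w ∈ Seven r) :
    inv w i ∈ Sodd r := by
  obtain ⟨m, hm⟩ := hw
  obtain ⟨k, hk⟩ := wt_add_inv_odd w i
  exact ⟨k - m, by omega⟩

lemma inv_mem_even {r : ℕ} {w : Fin r → Bool} (i : Fin r) (hw : w ∈ Sodd r) :
    inv w i ∈ Seven r := by
  obtain ⟨m, hm⟩ := hw
  obtain ⟨k, hk⟩ := wt_add_inv_odd w i
  exact ⟨k - m, by omega⟩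

lemma inv_invol {r : ℕ} (w : Fin r → Bool) (i : Fin r) : inv (inv w i) i = w := by
  funext j
  by_cases hj : j = i
  · subst hj; simp [inv]
  · simp [inv, Function.update_of_ne hj]

def Fmap {r : ℕ} (i : Fin r) : Vtx r (Seven r) → Vtx r (Sodd r)
  | Sum.inl w => Sum.inl ⟨inv w.1 i, inv_mem_odd i w.2⟩
  | Sum.inr (Sum.inl p) => Sum.inr (Sum.inl (p.1, if p.1 = i then !p.2 else p.2))
  | Sum.inr (Sum.inr j) => Sum.inr (Sum.inr j)

def Gmap {r : ℕ} (i : Fin r) : Vtx r (Sodd r) → Vtx r (Seven r)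
  | Sum.inl w => Sum.inl ⟨inv w.1 i, inv_mem_even i w.2⟩
  | Sum.inr (Sum.inl p) => Sum.inr (Sum.inl (p.1, if p.1 = i then !p.2 else p.2))
  | Sum.inr (Sum.inr j) => Sum.inr (Sum.inr j)

lemma GF {r : ℕ} (i : Fin r) (a : Vtx r (Seven r)) : Gmap i (Fmap i a) = a := by
  rcases a with ⟨w, hw⟩ | ⟨j, h⟩ | j
  · simp [Fmap, Gmap, inv_invol]
  · simp only [Fmap, Gmap]
    by_cases hj : j = i <;> simp [hj]
  · rfl

lemma FG {r : ℕ} (i : Fin r) (a : Vtx r (Sodd r)) : Fmap i (Gmap i a) = a := by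
  rcases a with ⟨w, hw⟩ | ⟨j, h⟩ | j
  · simp [Fmap, Gmap, inv_invol]
  · simp only [Fmap, Gmap]
    by_cases hj : j = i <;> simp [hj]
  · rfl

def Emap {r : ℕ} (i : Fin r) : Vtx r (Seven r) ≃ Vtx r (Sodd r) where
  toFun := Fmap i
  invFun := Gmap i
  left_inv := GF i
  right_inv := FG i

lemma Emap_mem {r : ℕ} (i : Fin r) (a : Vtx r (Seven r)) :
    a ∈ delX r (Seven r) i ↔ Fmap i a ∈ delX r (Sodd r) i := by
  rcases a with ⟨w, hw⟩ | ⟨j, h⟩ | j <;>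
    simp [delX, Fmap, vtxX]

lemma MRel_F {r : ℕ} (i : Fin r) (a b : Vtx r (Seven r))
    (ha : a ≠ vtxX i) (hb : b ≠ vtxX i) :
    MRel (Fmap i a) (Fmap i b) ↔ MRel a b := by
  rcases a with ⟨w, hw⟩ | ⟨j, h⟩ | j <;> rcases b with ⟨w', hw'⟩ | ⟨j', h'⟩ | j' <;>
      simp only [Fmap, MRel]
  · by_cases hj : j' = i
    · subst hj
      simp [inv]
    · simp [hj, inv, Function.update_of_ne hj]
  · by_cases hj : j = i
    · subst hj
      have : j' ≠ j := by
        intro hc; exact hb (by simp [vtxX, hc])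
      simp [this, Ne.symm this]
    · simp [hj]

theorem Mdel_label_isomorphic (r : ℕ) (hr : 4 ≤ r) (i : Fin r) :
    ∃ φ : Mdel r (Seven r) i ≃g Mdel r (Sodd r) i,
      ∀ (j : Fin r) (hj : j ≠ i),
        φ ⟨vtxX j, by simp [delX, vtxX, hj]⟩ = ⟨vtxX j, by simp [delX, vtxX, hj]⟩ := by
  refine ⟨⟨(Emap i).subtypeEquiv (Emap_mem i), ?_⟩, ?_⟩
  · intro a b
    show (M r (Sodd r)).Adj (Fmap i a.1) (Fmap i b.1) ↔ (M r (Seven r)).Adj a.1 b.1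
    rw [M, M, SimpleGraph.fromRel_adj, SimpleGraph.fromRel_adj]
    have ha : a.1 ≠ vtxX i := a.2
    have hb : b.1 ≠ vtxX i := b.2
    have hinj : Function.Injective (Fmap i) := (Emap i).injective
    rw [MRel_F i a.1 b.1 ha hb, MRel_F i b.1 a.1 hb ha, hinj.ne_iff]
  · intro j hj
    ext
    rfl
end

section
/- In the graph M_even (with r ≥ 4), for any leaf x_i and any vertex v_{j,h}, the graph distance between x_i and v_{j,h} is odd. -/
/-- Bipartite coloring. -/
def col {r : ℕ} {S : Set (Fin r → Bool)} : Vtx r S → ZMod 2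
  | Sum.inl _ => 0
  | Sum.inr (Sum.inl _) => 1
  | Sum.inr (Sum.inr _) => 0

lemma col_adj {r : ℕ} {S : Set (Fin r → Bool)} {a b : Vtx r S}
    (hab : (M r S).Adj a b) : col b = col a + 1 := by
  rw [M, SimpleGraph.fromRel_adj] at hab
  obtain ⟨-, hrel⟩ := hab
  rcases a with w | p | t <;> rcases b with w' | p' | t' <;>
    simp only [MRel, col] <;>
    first
      | decide
      | (rcases hrel with h1 | h1 <;> first | exact absurd h1 (by simp [MRel]) | decide)

lemma col_walk {r : ℕ} {S : Set (Fin r → Bool)} {a b : Vtx r S}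
    (p : (M r S).Walk a b) : col b = col a + p.length := by
  induction p with
  | nil => simp
  | cons hadj q ih =>
      rw [SimpleGraph.Walk.length_cons]
      rw [ih, col_adj hadj]
      push_cast
      ring

theorem Meven_leaf_v_dist_odd (r : ℕ) (hr : 4 ≤ r) (i j : Fin r) (h : Bool) :
    Odd ((M r (Seven r)).dist (vtxX i) (vtxV j h)) := by
  -- pick k ≠ j and m ∉ {j, k}
  have hcard : Fintype.card (Fin r) = r := Fintype.card_fin r
  obtain ⟨k, hkj⟩ : ∃ k : Fin r, k ≠ j := by
    have : Nontrivial (Fin r) := Fin.nontrivial_iff_two_le.mpr (by omega)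
    exact exists_ne j
  obtain ⟨m, hm⟩ : ∃ m : Fin r, m ≠ j ∧ m ≠ k := by
    have h2 : ((Finset.univ : Finset (Fin r)) \ {j, k}).Nonempty := by
      apply Finset.card_pos.mp
      rw [Finset.card_sdiff_of_subset (Finset.subset_univ _), Finset.card_univ, hcard]
      have : ({j, k} : Finset (Fin r)).card ≤ 2 :=
        (Finset.card_insert_le _ _).trans (by simp)
      omega
    obtain ⟨m, hm⟩ := h2
    simp [Finset.mem_sdiff] at hm
    exact ⟨m, hm.1, hm.2⟩
  obtain ⟨hmj, hmk⟩ := hm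
  -- the two u-vertices
  set w1 : Fin r → Bool := fun _ => false with hw1def
  have hw1 : w1 ∈ Seven r := by simp [Seven, wt, hw1def]
  set w2 : Fin r → Bool := if h then (fun t => decide (t = j ∨ t = m)) else (fun _ => false)
    with hw2def
  have hw2 : w2 ∈ Seven r := by
    cases h with
    | false => simp [Seven, wt, hw2def]
    | true =>
        simp only [Seven, Set.mem_setOf_eq, wt, hw2def, if_true]
        have : (Finset.univ.filter fun t : Fin r => decide (t = j ∨ t = m) = true)
            = {j, m} := by
          ext t; simp [Finset.mem_insert]
        rw [this, Finset.card_insert_of_notMem (by simp [Ne.symm hmj]), Finset.card_singleton]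
        exact even_two
  have hw2j : w2 j = h := by cases h <;> simp [hw2def]
  have hw2k : w2 k = false := by cases h <;> simp [hw2def, hkj, hmk.symm] <;> tauto
  -- adjacencies
  have adj1 : (M r (Seven r)).Adj (vtxX i) (vtxV i false) := by
    rw [M, SimpleGraph.fromRel_adj]
    exact ⟨by simp, Or.inr ⟨rfl, rfl⟩⟩
  have adj2 : (M r (Seven r)).Adj (vtxV i false) (vtxU w1 hw1) := by
    rw [M, SimpleGraph.fromRel_adj]
    exact ⟨by simp, Or.inr (by simp [MRel, hw1def])⟩
  have adj3 : (M r (Seven r)).Adj (vtxU w1 hw1) (vtxV k false) := by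
    rw [M, SimpleGraph.fromRel_adj]
    exact ⟨by simp, Or.inl (by simp [MRel, hw1def])⟩
  have adj4 : (M r (Seven r)).Adj (vtxV k false) (vtxU w2 hw2) := by
    rw [M, SimpleGraph.fromRel_adj]
    exact ⟨by simp, Or.inr (by simpa [MRel] using hw2k)⟩
  have adj5 : (M r (Seven r)).Adj (vtxU w2 hw2) (vtxV j h) := by
    rw [M, SimpleGraph.fromRel_adj]
    exact ⟨by simp, Or.inl (by simpa [MRel] using hw2j)⟩
  have hreach : (M r (Seven r)).Reachable (vtxX i) (vtxV j h) :=
    adj1.reachable.trans (adj2.reachable.trans (adj3.reachable.trans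
      (adj4.reachable.trans adj5.reachable)))
  obtain ⟨p, hp⟩ := hreach.exists_walk_length_eq_dist
  have hcol := col_walk p
  simp only [col] at hcol
  rw [hp] at hcol
  -- (dist : ZMod 2) = 1
  set n := (M r (Seven r)).dist (vtxX i) (vtxV j h)
  have h1 : ((n : ℕ) : ZMod 2) = 1 := by rw [hcol]; ring
  rw [Nat.odd_iff]
  have hmod : n % 2 = 0 ∨ n % 2 = 1 := Nat.mod_two_eq_zero_or_one n
  rcases hmod with h0 | h0
  · exfalso
    have h2 : ((n % 2 : ℕ) : ZMod 2) = (n : ZMod 2) := ZMod.natCast_mod n 2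
    rw [h0, h1] at h2
    exact absurd h2 (by decide)
  · exact h0
end

section
/- Let r ≥ 4. In the graph M_even, any vertex at distance exactly 2 from every leaf x_i (i ∈ [r]) must be u_w for some w ∈ S_even with w i = 0 for all i; hence u_0 (for the all-zero sequence) is the unique such vertex. -/
lemma walk2 {r : ℕ} {S : Set (Fin r → Bool)} {a b : Vtx r S}
    (h : (M r S).dist a b = 2) :
    ∃ c, (M r S).Adj a c ∧ (M r S).Adj c b := by
  obtain ⟨p, hp⟩ := SimpleGraph.exists_walk_of_dist_ne_zero (by rw [h]; norm_num)
  rw [h] at hp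
  cases p with
  | nil => simp at hp
  | cons h1 q =>
    cases q with
    | nil => simp at hp
    | cons h2 q2 =>
      exact ⟨_, h1, (q2.eq_of_length_eq_zero (by simpa using hp)) ▸ h2⟩

theorem Meven_center_unique (r : ℕ) (hr : 4 ≤ r)
    (h0 : (fun _ => false) ∈ Seven r) :
    ∀ a : Vtx r (Seven r),
      (∀ i : Fin r, (M r (Seven r)).dist a (vtxX i) = 2) ↔
        a = vtxU (fun _ => false) h0 := by
  have hrpos : 0 < r := by omega
  intro a
  constructor
  · intro hd
    match a with
    | Sum.inl ⟨w, hw⟩ =>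
      have hw0 : ∀ i, w i = false := by
        intro i
        obtain ⟨c, h1, h2⟩ := walk2 (hd i)
        rw [M, SimpleGraph.fromRel_adj] at h1 h2
        match c with
        | Sum.inl _ => simp [MRel] at h2
        | Sum.inr (Sum.inr j) => simp [MRel] at h2
        | Sum.inr (Sum.inl (j, h)) =>
          obtain ⟨-, h2 | h2⟩ := h2
          · obtain ⟨rfl, rfl⟩ := h2
            obtain ⟨-, h1 | h1⟩ := h1
            · exact h1
            · simp [MRel] at h1
          · simp [MRel] at h2
      have hwe : w = fun _ => false := funext hw0
      subst hwe
      rfl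
    | Sum.inr (Sum.inl (j, h)) =>
      exfalso
      obtain ⟨c, h1, h2⟩ := walk2 (hd ⟨0, hrpos⟩)
      rw [M, SimpleGraph.fromRel_adj] at h1 h2
      match c with
      | Sum.inl _ => simp [MRel] at h2
      | Sum.inr (Sum.inr k) => simp [MRel] at h2
      | Sum.inr (Sum.inl (k, h')) =>
        obtain ⟨-, h1 | h1⟩ := h1 <;> simp [MRel] at h1
    | Sum.inr (Sum.inr j) =>
      have := hd j
      rw [SimpleGraph.dist_self] at this
      omega
  · rintro rfl
    intro i
    have h1 : (M r (Seven r)).Adj (vtxU (fun _ => false) h0) (vtxV i false) := by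
      rw [M, SimpleGraph.fromRel_adj]
      exact ⟨by simp, Or.inl rfl⟩
    have h2 : (M r (Seven r)).Adj (vtxV i false) (vtxX i) := by
      rw [M, SimpleGraph.fromRel_adj]
      exact ⟨by simp, Or.inl ⟨rfl, rfl⟩⟩
    have p : (M r (Seven r)).Walk (vtxU (fun _ => false) h0) (vtxX i) :=
      SimpleGraph.Walk.cons h1 (SimpleGraph.Walk.cons h2 SimpleGraph.Walk.nil)
    have hle : (M r (Seven r)).dist (vtxU (fun _ => false) h0) (vtxX i) ≤ 2 :=
      by simpa using SimpleGraph.dist_le (SimpleGraph.Walk.cons h1 (SimpleGraph.Walk.cons h2 SimpleGraph.Walk.nil))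
    have hne0 : (M r (Seven r)).dist (vtxU (fun _ => false) h0) (vtxX i) ≠ 0 := by
      rw [SimpleGraph.dist_ne_zero_iff_ne_and_reachable]
      exact ⟨by simp, ⟨p⟩⟩
    have hne1 : (M r (Seven r)).dist (vtxU (fun _ => false) h0) (vtxX i) ≠ 1 := by
      intro hadj
      rw [SimpleGraph.dist_eq_one_iff_adj, M, SimpleGraph.fromRel_adj] at hadj
      obtain ⟨-, h | h⟩ := hadj <;> simp [MRel] at h
    omega
end
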